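/- Let H be an n×n upper Hessenberg matrix, p a monic polynomial of degree k with p(H) invertible, and suppose p(H) = QR with Q unitary and R upper triangular. Let H' = Q* H Q. Then ψ_k(H') ≤ ‖e_n* p(H)^{-1}‖^{-1/k}. -/

import Mathlib

open Matrix Polynomial

def IsHessenberg {n : ℕ} (H : Matrix (Fin n) (Fin n) ℂ) : Prop :=
  ∀ i j : Fin n, (j : ℕ) + 1 < (i : ℕ) → H i j = 0

noncomputable def subdiagProd {n : ℕ} (k : ℕ) (hk : k + 1 ≤ n) (H : Matrix (Fin n) (Fin n) ℂ) : ℂ :=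
  ∏ i : Fin k, H ⟨n - k + i, by have := i.2; omega⟩ ⟨n - k - 1 + i, by have := i.2; omega⟩

noncomputable def psi {n : ℕ} (k : ℕ) (hk : k + 1 ≤ n) (H : Matrix (Fin n) (Fin n) ℂ) : ℝ :=
  ‖subdiagProd k hk H‖ ^ ((k : ℝ)⁻¹)

noncomputable def rowNorm {n : ℕ} (M : Matrix (Fin n) (Fin n) ℂ) (i : Fin n) : ℝ :=
  Real.sqrt (∑ j, ‖M i j‖ ^ 2)

lemma matrix_apply_congr {n : ℕ} (M : Matrix (Fin n) (Fin n) ℂ) {a b c d : Fin n}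
    (h1 : a = c) (h2 : b = d) : M a b = M c d := by rw [h1, h2]

lemma hess_pow_zero {n : ℕ} {M : Matrix (Fin n) (Fin n) ℂ} (hM : IsHessenberg M) :
    ∀ (m : ℕ) (i j : Fin n), (j : ℕ) + m < (i : ℕ) → (M ^ m) i j = 0 := by
  intro m
  induction m with
  | zero =>
    intro i j h
    rw [pow_zero]
    exact Matrix.one_apply_ne (by intro e; subst e; omega)
  | succ m ih =>
    intro i j h
    rw [pow_succ, Matrix.mul_apply]
    apply Finset.sum_eq_zero
    intro l _
    by_cases hl : (j : ℕ) + 1 < (l : ℕ)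
    · rw [hM l j hl, mul_zero]
    · rw [ih i l (by omega), zero_mul]

lemma hess_pow_prod {n : ℕ} {M : Matrix (Fin n) (Fin n) ℂ} (hM : IsHessenberg M) :
    ∀ (m : ℕ) (i j : Fin n) (h : (j : ℕ) + m = (i : ℕ)),
      (M ^ m) i j = ∏ t : Fin m,
        M ⟨(j : ℕ) + (t : ℕ) + 1, by have := t.2; have := i.2; omega⟩
          ⟨(j : ℕ) + (t : ℕ), by have := t.2; have := i.2; omega⟩ := by
  intro m
  induction m with
  | zero =>
    intro i j h
    have : i = j := Fin.ext (by omega)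
    subst this
    simp [pow_zero, Matrix.one_apply_eq]
  | succ m ih =>
    intro i j h
    rw [pow_succ, Matrix.mul_apply]
    have hjn : (j : ℕ) + 1 < n := by have := i.2; omega
    rw [Finset.sum_eq_single ⟨(j : ℕ) + 1, hjn⟩]
    · rw [ih i ⟨(j : ℕ) + 1, hjn⟩ (by simp; omega)]
      rw [Fin.prod_univ_succ, mul_comm]
      have h0 : M ⟨(j : ℕ) + 1, hjn⟩ j =
          M ⟨(j : ℕ) + ((0 : Fin (m+1)) : ℕ) + 1, by omega⟩
            ⟨(j : ℕ) + ((0 : Fin (m+1)) : ℕ), by omega⟩ := by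
        congr 1 <;> exact Fin.ext (by simp)
      rw [h0]
      congr 1
      apply Finset.prod_congr rfl
      intro t _
      congr 1 <;> exact Fin.ext (by simp [Fin.val_succ]; ring)
    · intro l _ hl
      by_cases hcase : (j : ℕ) + 1 < (l : ℕ)
      · rw [hM l j hcase, mul_zero]
      · have : (l : ℕ) + m < i := by
          have : (l : ℕ) ≠ (j : ℕ) + 1 := by
            intro e; exact hl (Fin.ext (by simp [e]))
          omega
        rw [hess_pow_zero hM m i l this, zero_mul]
    · intro habs
      exact absurd (Finset.mem_univ _) habs

lemma hess_aeval_entry {n k : ℕ} {M : Matrix (Fin n) (Fin n) ℂ} (hM : IsHessenberg M)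
    (p : Polynomial ℂ) (hm : p.Monic) (hdeg : p.natDegree = k)
    (i j : Fin n) (h : (j : ℕ) + k = (i : ℕ)) :
    (Polynomial.aeval M p) i j = ∏ t : Fin k,
      M ⟨(j : ℕ) + (t : ℕ) + 1, by have := t.2; have := i.2; omega⟩
        ⟨(j : ℕ) + (t : ℕ), by have := t.2; have := i.2; omega⟩ := by
  rw [Polynomial.aeval_eq_sum_range, hdeg]
  rw [show ((∑ m ∈ Finset.range (k+1), p.coeff m • M ^ m) i j
      = ∑ m ∈ Finset.range (k+1), p.coeff m • ((M ^ m) i j)) from by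
    simp [Matrix.sum_apply]]
  rw [Finset.sum_range_succ, Finset.sum_eq_zero, zero_add]
  · have hc : p.coeff k = 1 := by rw [← hdeg]; exact hm.coeff_natDegree
    rw [hc, one_smul]
    exact hess_pow_prod hM k i j h
  · intro m hmem
    have : m < k := Finset.mem_range.mp hmem
    rw [hess_pow_zero hM m i j (by omega), smul_zero]

lemma hessConjPow {n : ℕ} (Q M : Matrix (Fin n) (Fin n) ℂ)
    (h1 : Qᴴ * Q = 1) (h2 : Q * Qᴴ = 1) (m : ℕ) :
    (Qᴴ * M * Q) ^ m = Qᴴ * M ^ m * Q := by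
  induction m with
  | zero => rw [pow_zero, pow_zero, Matrix.mul_one, h1]
  | succ m ih =>
    rw [pow_succ, ih, pow_succ]
    have key : Q * (Qᴴ * (M * Q)) = M * Q := by
      rw [← Matrix.mul_assoc, h2, Matrix.one_mul]
    simp only [Matrix.mul_assoc]
    rw [key]

lemma hessConjAeval {n : ℕ} (Q M : Matrix (Fin n) (Fin n) ℂ)
    (h1 : Qᴴ * Q = 1) (h2 : Q * Qᴴ = 1) (p : Polynomial ℂ) :
    Polynomial.aeval (Qᴴ * M * Q) p = Qᴴ * Polynomial.aeval M p * Q := by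
  rw [Polynomial.aeval_eq_sum_range, Polynomial.aeval_eq_sum_range,
    Matrix.mul_sum, Matrix.sum_mul]
  apply Finset.sum_congr rfl
  intro m _
  rw [hessConjPow Q M h1 h2 m, Matrix.mul_smul, Matrix.smul_mul]

/-- A QR step with shift polynomial `p` drives the potential below
`‖e_n* p(H)⁻¹‖^{-1/k}`. -/
theorem stmt_2 {n k : ℕ} (hk : 1 ≤ k) (hkn : k + 1 ≤ n)
    (H Q R : Matrix (Fin n) (Fin n) ℂ) (hH : IsHessenberg H)
    (p : Polynomial ℂ) (hmonic : p.Monic) (hdeg : p.natDegree = k)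
    (hinv : IsUnit (Polynomial.aeval H p))
    (hQ : Q ∈ Matrix.unitaryGroup (Fin n) ℂ)
    (hR : ∀ i j : Fin n, j < i → R i j = 0)
    (hQR : Polynomial.aeval H p = Q * R) :
    psi k hkn (Qᴴ * H * Q) ≤
      rowNorm (Polynomial.aeval H p)⁻¹ ⟨n - 1, by omega⟩ ^ (-(k : ℝ)⁻¹) := by
  have hn : 0 < n := by omega
  set P : Matrix (Fin n) (Fin n) ℂ := Polynomial.aeval H p with hP
  set l : Fin n := ⟨n - 1, by omega⟩ with hl
  set j0 : Fin n := ⟨n - 1 - k, by omega⟩ with hj0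
  -- unitary facts
  have hQ1 : Qᴴ * Q = 1 := by
    have := (Matrix.mem_unitaryGroup_iff').mp hQ
    rwa [Matrix.star_eq_conjTranspose] at this
  have hQ2 : Q * Qᴴ = 1 := by
    have := (Matrix.mem_unitaryGroup_iff).mp hQ
    rwa [Matrix.star_eq_conjTranspose] at this
  -- R is a unit
  have hReq : R = Qᴴ * P := by rw [hQR, ← Matrix.mul_assoc, hQ1, Matrix.one_mul]
  have hQunit : IsUnit Qᴴ := ⟨⟨Qᴴ, Q, hQ1, hQ2⟩, rfl⟩
  have hRu : IsUnit R := hReq ▸ hQunit.mul hinv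
  have hRdet : IsUnit R.det := (Matrix.isUnit_iff_isUnit_det R).mp hRu
  have hPdet : IsUnit P.det := (Matrix.isUnit_iff_isUnit_det P).mp hinv
  have hRR : R * R⁻¹ = 1 := Matrix.mul_nonsing_inv R hRdet
  have hRR' : R⁻¹ * R = 1 := Matrix.nonsing_inv_mul R hRdet
  have hPP : P * P⁻¹ = 1 := Matrix.mul_nonsing_inv P hPdet
  have hPP' : P⁻¹ * P = 1 := Matrix.nonsing_inv_mul P hPdet
  -- R⁻¹ triangular
  haveI : Invertible R := R.invertibleOfIsUnitDet hRdet
  have hRtri : R.BlockTriangular id := fun i j h => hR i j h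
  have hRinvTri : (R⁻¹).BlockTriangular id :=
    Matrix.blockTriangular_inv_of_blockTriangular hRtri
  have hRinv0 : ∀ i j : Fin n, j < i → R⁻¹ i j = 0 := fun i j h => hRinvTri h
  -- P⁻¹ = R⁻¹ * Qᴴ
  have hPinv : P⁻¹ = R⁻¹ * Qᴴ := by
    apply Matrix.inv_eq_right_inv
    rw [hQR, Matrix.mul_assoc, ← Matrix.mul_assoc R R⁻¹ Qᴴ, hRR, Matrix.one_mul, hQ2]
  -- every j ≠ l satisfies j < l
  have hlt : ∀ b : Fin n, b ≠ l → b < l := by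
    intro b hb
    have : (b : ℕ) < n := b.2
    have hne : (b : ℕ) ≠ n - 1 := fun e => hb (Fin.ext (by simp [hl, e]))
    exact Fin.lt_def.mpr (by simp [hl]; omega)
  -- diagonal relation
  have hdiag : R l l * R⁻¹ l l = 1 := by
    have h1 : (R * R⁻¹) l l = 1 := by rw [hRR]; simp
    rw [Matrix.mul_apply] at h1
    rwa [Finset.sum_eq_single l
      (fun b _ hb => by rw [hR l b (hlt b hb), zero_mul])
      (fun habs => absurd (Finset.mem_univ _) habs)] at h1
  have hRll_ne : R l l ≠ 0 := fun e => by simp [e] at hdiag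
  have hRill_ne : R⁻¹ l l ≠ 0 := fun e => by simp [e] at hdiag
  -- row of P⁻¹
  have hrow : ∀ jj : Fin n, P⁻¹ l jj = R⁻¹ l l * Qᴴ l jj := by
    intro jj
    rw [hPinv, Matrix.mul_apply]
    exact Finset.sum_eq_single l
      (fun b _ hb => by rw [hRinv0 l b (hlt b hb), zero_mul])
      (fun habs => absurd (Finset.mem_univ _) habs)
  -- row norm of Qᴴ is 1
  have hQrow : ∑ jj : Fin n, ‖Qᴴ l jj‖ ^ 2 = 1 := by
    have h1 : (Qᴴ * Q) l l = 1 := by rw [hQ1]; simp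
    rw [Matrix.mul_apply] at h1
    have h2 : ∀ jj : Fin n, Qᴴ l jj * Q jj l = ((‖Qᴴ l jj‖ ^ 2 : ℝ) : ℂ) := by
      intro jj
      rw [Matrix.conjTranspose_apply, Complex.star_def, mul_comm, Complex.mul_conj,
        Complex.normSq_eq_norm_sq]
      norm_cast
      simp [Matrix.conjTranspose_apply]
    rw [Finset.sum_congr rfl (fun jj _ => h2 jj)] at h1
    exact_mod_cast h1
  -- rowNorm value
  have hrowNorm : rowNorm P⁻¹ l = ‖R⁻¹ l l‖ := by
    unfold rowNorm
    have : ∀ jj : Fin n, ‖P⁻¹ l jj‖ ^ 2 = ‖R⁻¹ l l‖ ^ 2 * ‖Qᴴ l jj‖ ^ 2 := by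
      intro jj; rw [hrow jj, norm_mul, mul_pow]
    rw [Finset.sum_congr rfl (fun jj _ => this jj), ← Finset.mul_sum, hQrow, mul_one]
    exact Real.sqrt_sq (norm_nonneg _)
  -- H' is Hessenberg
  have hQc : Q = P * R⁻¹ := by rw [hQR, Matrix.mul_assoc, hRR, Matrix.mul_one]
  have hQHc : Qᴴ = R * P⁻¹ := by
    have h1 : Q * (R * P⁻¹) = 1 := by
      rw [hQc, Matrix.mul_assoc, ← Matrix.mul_assoc R⁻¹ R P⁻¹, hRR', Matrix.one_mul, hPP]
    calc Qᴴ = Qᴴ * (Q * (R * P⁻¹)) := by rw [h1, Matrix.mul_one]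
    _ = (Qᴴ * Q) * (R * P⁻¹) := by rw [Matrix.mul_assoc]
    _ = R * P⁻¹ := by rw [hQ1, Matrix.one_mul]
  have hcomm : H * P = P * H := by
    calc H * P = Polynomial.aeval H (X * p) := by rw [_root_.map_mul, Polynomial.aeval_X]
    _ = Polynomial.aeval H (p * X) := by rw [mul_comm]
    _ = P * H := by rw [_root_.map_mul, Polynomial.aeval_X]
  have hH'eq : Qᴴ * H * Q = R * H * R⁻¹ := by
    rw [hQHc, hQc]
    calc R * P⁻¹ * H * (P * R⁻¹) = R * (P⁻¹ * (H * P)) * R⁻¹ := by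
          simp only [Matrix.mul_assoc]
    _ = R * (P⁻¹ * (P * H)) * R⁻¹ := by rw [hcomm]
    _ = R * H * R⁻¹ := by rw [← Matrix.mul_assoc P⁻¹ P H, hPP', Matrix.one_mul]
  have hH' : IsHessenberg (Qᴴ * H * Q) := by
    rw [hH'eq]
    intro i j hij
    rw [Matrix.mul_apply]
    apply Finset.sum_eq_zero
    intro b _
    by_cases hb : j < b
    · rw [hRinv0 b j hb, mul_zero]
    · have hbj : (b : ℕ) ≤ (j : ℕ) := by
        have := Fin.lt_def.not.mp hb; omega
      rw [show (R * H) i b = 0 from ?_, zero_mul]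
      rw [Matrix.mul_apply]
      apply Finset.sum_eq_zero
      intro a _
      by_cases ha : a < i
      · rw [hR i a ha, zero_mul]
      · have hia : (i : ℕ) ≤ (a : ℕ) := by
          have := Fin.lt_def.not.mp ha; omega
        rw [hH a b (by omega), mul_zero]
  -- p(H') = R * Q
  have hpH' : Polynomial.aeval (Qᴴ * H * Q) p = R * Q := by
    rw [hessConjAeval Q H hQ1 hQ2 p, ← hP, hQR, ← Matrix.mul_assoc, hQ1, Matrix.one_mul]
  -- entry of p(H')
  have hjl : (j0 : ℕ) + k = (l : ℕ) := by simp [hj0, hl]; omega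
  have hentry : (Polynomial.aeval (Qᴴ * H * Q) p) l j0 = R l l * Q l j0 := by
    rw [hpH', Matrix.mul_apply]
    exact Finset.sum_eq_single l
      (fun b _ hb => by rw [hR l b (hlt b hb), zero_mul])
      (fun habs => absurd (Finset.mem_univ _) habs)
  -- subdiagProd = the entry
  have hsub : subdiagProd k hkn (Qᴴ * H * Q) = (Polynomial.aeval (Qᴴ * H * Q) p) l j0 := by
    rw [hess_aeval_entry hH' p hmonic hdeg l j0 hjl]
    unfold subdiagProd
    apply Finset.prod_congr rfl
    intro t _
    have ht := t.2
    have hv : (j0 : ℕ) = n - 1 - k := rfl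
    exact matrix_apply_congr _ (by simp only [Fin.mk.injEq]; omega)
      (by simp only [Fin.mk.injEq]; omega)
  -- column norm bound on Q
  have hQcol : ‖Q l j0‖ ≤ 1 := by
    have h1 : (Qᴴ * Q) j0 j0 = 1 := by rw [hQ1]; simp
    rw [Matrix.mul_apply] at h1
    have h2 : ∀ a : Fin n, Qᴴ j0 a * Q a j0 = ((‖Q a j0‖ ^ 2 : ℝ) : ℂ) := by
      intro a
      rw [Matrix.conjTranspose_apply, Complex.star_def, mul_comm, Complex.mul_conj,
        Complex.normSq_eq_norm_sq]
    rw [Finset.sum_congr rfl (fun a _ => h2 a)] at h1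
    have h3 : ∑ a : Fin n, ‖Q a j0‖ ^ 2 = 1 := by
      exact_mod_cast h1
    have h4 : ‖Q l j0‖ ^ 2 ≤ 1 := by
      rw [← h3]
      exact Finset.single_le_sum (f := fun a => ‖Q a j0‖ ^ 2)
        (fun a _ => sq_nonneg _) (Finset.mem_univ l)
    exact (pow_le_one_iff_of_nonneg (norm_nonneg _) two_ne_zero).mp h4
  -- final computation
  have habs_le : ‖subdiagProd k hkn (Qᴴ * H * Q)‖ ≤ ‖R l l‖ := by
    rw [hsub, hentry, norm_mul]
    calc ‖R l l‖ * ‖Q l j0‖ ≤ ‖R l l‖ * 1 :=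
      mul_le_mul_of_nonneg_left hQcol (norm_nonneg _)
    _ = ‖R l l‖ := mul_one _
  have hnorm_inv : ‖R⁻¹ l l‖ = ‖R l l‖⁻¹ := by
    have h1 : ‖R l l‖ * ‖R⁻¹ l l‖ = 1 := by rw [← norm_mul, hdiag, norm_one]
    exact eq_inv_of_mul_eq_one_left (by rw [mul_comm]; exact h1)
  unfold psi
  rw [show rowNorm P⁻¹ ⟨n - 1, by omega⟩ = ‖R⁻¹ l l‖ from hrowNorm]
  rw [hnorm_inv]
  have hRpos : 0 < ‖R l l‖ := norm_pos_iff.mpr hRll_ne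
  rw [Real.rpow_neg (inv_nonneg.mpr hRpos.le), Real.inv_rpow hRpos.le, inv_inv]
  exact Real.rpow_le_rpow (norm_nonneg _) habs_le (by positivity)
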